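/- arXiv:2301.09530 — 2 statements merged into one kernel-verified Lean document; each statement's English description precedes it below -/
import Mathlib

section
/- For n ≥ 1, every rectangular permutation π ∈ S_n can be written in exactly one of the following four forms, with σ a rectangular permutation in S_{n−1} (and σ is uniquely determined in each case): (a) π = ρ_{1,1}(σ); (b) π = ρ_{1,2}(σ) with σ_1 ≠ 1; (c) π = ρ_{σ_1,1}(σ) with σ_1 ≠ 1; (d) π = ρ_{σ_1+1,1}(σ); here σ_1 denotes the first value of σ in one-line notation. -/
/-- `w` contains the pattern `p` (both given in one-line notation):
there is a subsequence of `w` whose entries are in the same relative order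
as the entries of `p`. -/
def ContainsPattern (w p : List ℕ) : Prop :=
  ∃ s : List ℕ, s.Sublist w ∧ s.length = p.length ∧
    ∀ a b : ℕ, a < p.length → b < p.length →
      (s.getD a 0 < s.getD b 0 ↔ p.getD a 0 < p.getD b 0)

/-- `w` avoids the pattern `p`. -/
def Avoids (w p : List ℕ) : Prop := ¬ ContainsPattern w p

/-- `w` is the one-line notation of a permutation of `{1, …, n}`. -/
def IsPermList (n : ℕ) (w : List ℕ) : Prop := w.Perm (List.range' 1 n)

/-- A permutation is rectangular if it avoids 2413, 2431, 4213 and 4231. -/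
def Rectangular (w : List ℕ) : Prop :=
  Avoids w [2,4,1,3] ∧ Avoids w [2,4,3,1] ∧ Avoids w [4,2,1,3] ∧ Avoids w [4,2,3,1]

/-- A permutation is evil-avoiding if it avoids 2413, 4132, 4213 and 3214. -/
def EvilAvoiding (w : List ℕ) : Prop :=
  Avoids w [2,4,1,3] ∧ Avoids w [4,1,3,2] ∧ Avoids w [4,2,1,3] ∧ Avoids w [3,2,1,4]

/-- The number of recoils of `w`: the number of values `i ∈ {1,…,n-1}`
that occur after `i+1` in the one-line notation `w`. -/
def recoils (w : List ℕ) : ℕ :=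
  ((Finset.Icc 1 (w.length - 1)).filter (fun i => w.idxOf (i+1) < w.idxOf i)).card

/-- The insertion operator ρ_{i,j} (with 1-indexed position `j`): increment by 1
every value of `w` that is ≥ i, then insert the value `i` in position `j`. -/
def insOp (i j : ℕ) (w : List ℕ) : List ℕ :=
  List.insertIdx (w.map (fun v => if i ≤ v then v + 1 else v)) (j-1) i

/-! Let `π = a b ⋯`. If `a = 1`, deleting `a` and standardizing gives form (a). Otherwise
rectangularity forces `b ∈ {1, a + 1, a - 1}`: if not, both `1` and `min a b + 1` occur after
`b`, and `a b` followed by these two values in either order is an occurrence of 2413, 2431, 4213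
or 4231. The three cases give forms (b) (for `a ≥ 3`), (c), (d), where `σ` is obtained by deleting
the inserted value (`1`, resp. `a`) and standardizing; pattern avoidance passes to subsequences
and to order-preserving relabellings, so `σ` is rectangular. Uniqueness: the form is read off
from the first two entries of `π`, and each `ρ_{i,j}` is injective. -/

def shiftUp (i v : ℕ) : ℕ := if i ≤ v then v + 1 else v

def shiftDown (i v : ℕ) : ℕ := if i < v then v - 1 else v

def removeValue (i : ℕ) (w : List ℕ) : List ℕ := (w.filter (· ≠ i)).map (shiftDown i)

lemma removeValue_cons_self (i : ℕ) (t : List ℕ) :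
    removeValue i (i :: t) = removeValue i t := by
  simp [removeValue]

lemma removeValue_cons_of_ne {i a : ℕ} (h : a ≠ i) (t : List ℕ) :
    removeValue i (a :: t) = shiftDown i a :: removeValue i t := by
  simp [removeValue, h]

lemma shiftUp_injective (i : ℕ) : Function.Injective (shiftUp i) := by
  intro x y h
  unfold shiftUp at h
  split_ifs at h <;> omega

lemma shiftUp_shiftDown {i v : ℕ} (h : v ≠ i) : shiftUp i (shiftDown i v) = v := by
  unfold shiftUp shiftDown
  split_ifs <;> omega

lemma shiftDown_lt_shiftDown_iff {i x y : ℕ} (hx : x ≠ i) (hy : y ≠ i) :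
    shiftDown i x < shiftDown i y ↔ x < y := by
  unfold shiftDown
  split_ifs <;> omega

lemma insOp_eq (i j : ℕ) (w : List ℕ) : insOp i j w = (w.map (shiftUp i)).insertIdx (j - 1) i :=
  rfl

lemma insOp_one (i : ℕ) (w : List ℕ) : insOp i 1 w = i :: w.map (shiftUp i) := by
  simp [insOp_eq]

lemma insOp_injective (i j : ℕ) : Function.Injective (insOp i j) := fun _ _ h =>
  (List.map_injective_iff.mpr (shiftUp_injective i)) (List.insertIdx_injective _ _ h)

lemma List.insertIdx_length_append {α : Type*} (l₁ l₂ : List α) (x : α) :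
    (l₁ ++ l₂).insertIdx l₁.length x = l₁ ++ x :: l₂ := by
  induction l₁ <;> simp_all [List.insertIdx_succ_cons]

lemma insOp_removeValue {i : ℕ} {l₁ l₂ : List ℕ} (h : i ∉ l₁ ++ l₂) :
    insOp i (l₁.length + 1) (removeValue i (l₁ ++ i :: l₂)) = l₁ ++ i :: l₂ := by
  have hfilter : (l₁ ++ i :: l₂).filter (· ≠ i) = l₁ ++ l₂ := by
    rw [List.filter_append, List.filter_cons_of_neg (by simp), ← List.filter_append,
      List.filter_eq_self]
    intro v hv
    simpa using ne_of_mem_of_not_mem hv h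
  rw [insOp_eq, removeValue, hfilter, List.map_map, Nat.add_sub_cancel]
  convert List.insertIdx_length_append l₁ l₂ i
  conv_rhs => rw [← List.map_id (l₁ ++ l₂)]
  exact List.map_congr_left fun v hv => shiftUp_shiftDown (ne_of_mem_of_not_mem hv h)

lemma isPermList_iff {n : ℕ} {w : List ℕ} :
    IsPermList n w ↔ w.Nodup ∧ ∀ v, v ∈ w ↔ 1 ≤ v ∧ v ≤ n := by
  have hrange (v : ℕ) : v ∈ List.range' 1 n ↔ 1 ≤ v ∧ v ≤ n := by
    rw [List.mem_range'_1]
    omega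
  constructor
  · intro h
    exact ⟨h.nodup_iff.mpr List.nodup_range', fun v => h.mem_iff.trans (hrange v)⟩
  · rintro ⟨hnd, hmem⟩
    exact (List.perm_ext_iff_of_nodup hnd List.nodup_range').mpr fun v =>
      (hmem v).trans (hrange v).symm

lemma IsPermList.removeValue {n i : ℕ} {w : List ℕ} (hw : IsPermList n w) (hi : i ∈ w) :
    IsPermList (n - 1) (removeValue i w) := by
  obtain ⟨hnd, hmem⟩ := isPermList_iff.mp hw
  have hi_range := (hmem i).mp hi
  refine isPermList_iff.mpr ⟨(hnd.filter _).map_on fun x hx y hy hxy => ?_, fun v => ?_⟩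
  · simp only [List.mem_filter, decide_eq_true_eq] at hx hy
    unfold shiftDown at hxy
    split_ifs at hxy <;> omega
  · simp only [_root_.removeValue, List.mem_map, List.mem_filter, hmem, decide_eq_true_eq]
    refine ⟨?_, fun hv => ⟨shiftUp i v, ?_⟩⟩
    · rintro ⟨u, ⟨hu, hui⟩, rfl⟩
      unfold shiftDown
      split_ifs <;> omega
    · simp only [shiftUp, shiftDown]
      split_ifs <;> omega

lemma ContainsPattern.of_sublist {u w p : List ℕ} (h : ContainsPattern u p)
    (huw : u.Sublist w) : ContainsPattern w p :=
  let ⟨s, hs, hlen, hord⟩ := h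
  ⟨s, hs.trans huw, hlen, hord⟩

lemma ContainsPattern.of_map {f : ℕ → ℕ} {u p : List ℕ} (h : ContainsPattern (u.map f) p)
    (hf : ∀ x ∈ u, ∀ y ∈ u, f x < f y ↔ x < y) : ContainsPattern u p := by
  obtain ⟨t, ht, hlen, hord⟩ := h
  obtain ⟨s, hs, rfl⟩ := List.sublist_map_iff.mp ht
  rw [List.length_map] at hlen
  refine ⟨s, hs, hlen, fun a b ha hb => ?_⟩
  rw [← hord a b ha hb]
  rw [← hlen] at ha hb
  simp only [List.getD_eq_getElem _ _ ha, List.getD_eq_getElem _ _ hb,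
    List.getD_eq_getElem (s.map f) 0 (by simpa using ha),
    List.getD_eq_getElem (s.map f) 0 (by simpa using hb), List.getElem_map]
  exact (hf _ (hs.subset (List.getElem_mem ha)) _ (hs.subset (List.getElem_mem hb))).symm

lemma Avoids.removeValue {w p : List ℕ} (h : Avoids w p) (i : ℕ) :
    Avoids (removeValue i w) p := fun hc =>
  h <| (hc.of_map fun x hx y hy => shiftDown_lt_shiftDown_iff
    (by simpa using (List.mem_filter.mp hx).2)
    (by simpa using (List.mem_filter.mp hy).2)).of_sublist List.filter_sublist

lemma Rectangular.removeValue {w : List ℕ} (h : Rectangular w) (i : ℕ) :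
    Rectangular (removeValue i w) :=
  ⟨h.1.removeValue i, h.2.1.removeValue i, h.2.2.1.removeValue i, h.2.2.2.removeValue i⟩

-- The four forbidden patterns are exactly the order types of `[a, b, c, d]` in which
-- `min c d < min a b < max c d < max a b`.
lemma Rectangular.not_interleaved {w : List ℕ} (hw : Rectangular w) {a b c d : ℕ}
    (hs : [a, b, c, d].Sublist w) (h₁ : min c d < min a b) (h₂ : min a b < max c d)
    (h₃ : max c d < max a b) : False := by
  obtain ⟨h2413, h2431, h4213, h4231⟩ := hw
  have contains (p : List ℕ) (hp : p.length = 4)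
      (hord : ∀ x y, x < 4 → y < 4 → ([a, b, c, d].getD x 0 < [a, b, c, d].getD y 0 ↔
        p.getD x 0 < p.getD y 0)) : ContainsPattern w p :=
    ⟨_, hs, hp.symm, hp ▸ hord⟩
  rcases le_total a b with hab | hab <;> rcases le_total c d with hcd | hcd <;>
    simp only [min_eq_left, min_eq_right, max_eq_left, max_eq_right, hab, hcd] at h₁ h₂ h₃
  · refine h2413 (contains _ rfl ?_)
    intro x y hx hy; interval_cases x <;> interval_cases y <;> simp <;> omega
  · refine h2431 (contains _ rfl ?_)
    intro x y hx hy; interval_cases x <;> interval_cases y <;> simp <;> omega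
  · refine h4213 (contains _ rfl ?_)
    intro x y hx hy; interval_cases x <;> interval_cases y <;> simp <;> omega
  · refine h4231 (contains _ rfl ?_)
    intro x y hx hy; interval_cases x <;> interval_cases y <;> simp <;> omega

lemma List.pair_sublist_or_pair_sublist {α : Type*} {x y : α} {l : List α} (hx : x ∈ l)
    (hy : y ∈ l) (hxy : x ≠ y) : [x, y].Sublist l ∨ [y, x].Sublist l := by
  obtain ⟨s, t, rfl⟩ := List.append_of_mem hx
  rcases List.mem_append.mp hy with hy | hy
  · exact Or.inr ((List.singleton_sublist.mpr hy).append
      (List.singleton_sublist.mpr (List.mem_cons_self ..)))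
  · exact Or.inl (((List.singleton_sublist.mpr
      ((List.mem_cons.mp hy).resolve_left hxy.symm)).cons_cons x).trans
      (List.sublist_append_right s _))

lemma Rectangular.snd_eq_one_or_adjacent {n a b : ℕ} {t : List ℕ}
    (hperm : IsPermList n (a :: b :: t)) (hrect : Rectangular (a :: b :: t)) (ha : a ≠ 1) :
    b = 1 ∨ b = a + 1 ∨ b + 1 = a := by
  by_contra! hb
  obtain ⟨hnd, hmem⟩ := isPermList_iff.mp hperm
  have hab : a ≠ b := fun h => (List.nodup_cons.mp hnd).1 (h ▸ List.mem_cons_self ..)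
  have ha' := (hmem a).mp (by simp)
  have hb' := (hmem b).mp (by simp)
  have mem_t (v : ℕ) (h₁ : 1 ≤ v) (h₂ : v ≤ n) (hva : v ≠ a) (hvb : v ≠ b) : v ∈ t := by
    simpa [hva, hvb] using (hmem v).mpr ⟨h₁, h₂⟩
  rcases List.pair_sublist_or_pair_sublist (mem_t 1 le_rfl (by omega) (by omega) (by omega))
    (mem_t (min a b + 1) (by omega) (by omega) (by omega) (by omega)) (by omega)
    with hs | hs <;>
    exact hrect.not_interleaved ((hs.cons_cons b).cons_cons a) (by omega) (by omega) (by omega)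

lemma IsPermList.zero_notMem {n : ℕ} {w : List ℕ} (h : IsPermList n w) : 0 ∉ w := fun h0 =>
  absurd ((isPermList_iff.mp h).2 0 |>.mp h0).1 (by decide)

def FactorsAs (w : List ℕ) (x : Fin 4 × List ℕ) : Prop :=
  (x.1 = 0 ∧ w = insOp 1 1 x.2) ∨
  (x.1 = 1 ∧ x.2.headI ≠ 1 ∧ w = insOp 1 2 x.2) ∨
  (x.1 = 2 ∧ x.2 ≠ [] ∧ x.2.headI ≠ 1 ∧ w = insOp x.2.headI 1 x.2) ∨
  (x.1 = 3 ∧ x.2 ≠ [] ∧ w = insOp (x.2.headI + 1) 1 x.2)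

-- With `c = σ₁ ≥ 1`, the forms (a)–(d) begin with `1`, `(c+1) 1`, `c (c+1)`, `(c+1) c`;
-- `2 1` is of form (d) only, since (b) requires `c ≠ 1`.
def formOf (w : List ℕ) : Fin 4 :=
  if w.headI = 1 then 0
  else if w.tail.headI + 1 = w.headI then 3
  else if w.tail.headI = w.headI + 1 then 2
  else 1

lemma FactorsAs.fst_eq_formOf {w : List ℕ} {x : Fin 4 × List ℕ} (h : FactorsAs w x)
    (h0 : 0 ∉ x.2) : x.1 = formOf w := by
  obtain ⟨k, σ⟩ := x
  rcases h with ⟨rfl, rfl⟩ | ⟨rfl, hσ, rfl⟩ | ⟨rfl, hne, hσ, rfl⟩ | ⟨rfl, hne, rfl⟩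
  · simp [formOf, insOp_one]
  · rcases σ with _ | ⟨c, u⟩
    · rfl
    · have hc : c ≠ 0 := fun hc => h0 (hc ▸ List.mem_cons_self ..)
      simp only [List.headI] at hσ
      simp [formOf, insOp_eq, shiftUp, Nat.one_le_iff_ne_zero.mpr hc, hσ, hc]
  · obtain ⟨c, u, rfl⟩ := List.exists_cons_of_ne_nil hne
    simp only [List.headI] at hσ
    simp [formOf, insOp_one, shiftUp, hσ]
    omega
  · obtain ⟨c, u, rfl⟩ := List.exists_cons_of_ne_nil hne
    have hc : c ≠ 0 := fun hc => h0 (hc ▸ List.mem_cons_self ..)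
    simp [formOf, insOp_one, shiftUp, hc]

lemma FactorsAs.unique {w : List ℕ} {x y : Fin 4 × List ℕ} (hx : FactorsAs w x)
    (hy : FactorsAs w y) (hx0 : 0 ∉ x.2) (hy0 : 0 ∉ y.2) : x = y := by
  have hk : x.1 = y.1 := (hx.fst_eq_formOf hx0).trans (hy.fst_eq_formOf hy0).symm
  obtain ⟨k, σ⟩ := x
  obtain ⟨k', τ⟩ := y
  obtain rfl : k = k' := hk
  dsimp only [FactorsAs] at hx hy
  have head_eq {i i' : ℕ} (h : insOp i 1 σ = insOp i' 1 τ) : i = i' := by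
    simpa [insOp_one] using congrArg List.headI h
  rcases hx with ⟨rfl, hσ⟩ | ⟨rfl, -, hσ⟩ | ⟨rfl, -, -, hσ⟩ | ⟨rfl, -, hσ⟩ <;>
    rcases hy with ⟨hk, hτ⟩ | ⟨hk, -, hτ⟩ | ⟨hk, -, -, hτ⟩ | ⟨hk, -, hτ⟩ <;>
    first | exact absurd hk (by decide) | obtain h := hσ.symm.trans hτ
  · exact Prod.ext rfl (insOp_injective 1 1 h)
  · exact Prod.ext rfl (insOp_injective 1 2 h)
  · rw [head_eq h] at h
    exact Prod.ext rfl (insOp_injective _ 1 h)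
  · rw [head_eq h] at h
    exact Prod.ext rfl (insOp_injective _ 1 h)

lemma exists_factorsAs {n : ℕ} {w : List ℕ} (hn : 1 ≤ n) (hperm : IsPermList n w)
    (hrect : Rectangular w) : ∃ k, ∃ i ∈ w, FactorsAs w (k, removeValue i w) := by
  obtain ⟨hnd, hmem⟩ := isPermList_iff.mp hperm
  obtain ⟨a, t, rfl⟩ : ∃ a t, w = a :: t :=
    List.exists_cons_of_ne_nil (List.ne_nil_of_mem ((hmem 1).mpr ⟨le_rfl, hn⟩))
  have hat : a ∉ t := (List.nodup_cons.mp hnd).1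
  have insOp_head : insOp a 1 (removeValue a (a :: t)) = a :: t := by
    simpa using insOp_removeValue (l₁ := []) (l₂ := t) hat
  by_cases ha : a = 1
  · subst ha
    exact ⟨0, 1, List.mem_cons_self .., Or.inl ⟨rfl, insOp_head.symm⟩⟩
  obtain ⟨b, r, rfl⟩ : ∃ b r, t = b :: r := by
    refine List.exists_cons_of_ne_nil (List.ne_nil_of_mem (a := 1) ?_)
    simpa [Ne.symm ha] using (hmem 1).mpr ⟨le_rfl, hn⟩
  have hab : b ≠ a := fun h => hat (h ▸ List.mem_cons_self ..)
  have removeValue_eq : removeValue a (a :: b :: r) = shiftDown a b :: removeValue a r := by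
    rw [removeValue_cons_self, removeValue_cons_of_ne hab]
  have removeValue_ne_nil : removeValue a (a :: b :: r) ≠ [] := by simp [removeValue_eq]
  have head_removeValue : (removeValue a (a :: b :: r)).headI = shiftDown a b := by
    rw [removeValue_eq, List.headI]
  by_cases hd : b + 1 = a
  · refine ⟨3, a, List.mem_cons_self .., .inr <| .inr <| .inr ⟨rfl, removeValue_ne_nil, ?_⟩⟩
    rw [head_removeValue, shiftDown, if_neg (by omega), hd, insOp_head]
  rcases hrect.snd_eq_one_or_adjacent hperm ha with rfl | rfl | hb
  · have h1 : 1 ∉ [a] ++ r := by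
      simpa [Ne.symm ha] using (List.nodup_cons.mp (List.nodup_cons.mp hnd).2).1
    refine ⟨1, 1, by simp, .inr <| .inl ⟨rfl, ?_, (insOp_removeValue h1).symm⟩⟩
    rw [removeValue_cons_of_ne ha, List.headI, shiftDown]
    split_ifs <;> omega
  · have head_eq : (removeValue a (a :: (a + 1) :: r)).headI = a := by
      rw [head_removeValue, shiftDown, if_pos (by omega), Nat.add_sub_cancel]
    refine ⟨2, a, List.mem_cons_self .., .inr <| .inr <| .inl ⟨rfl, removeValue_ne_nil, ?_, ?_⟩⟩
    · rwa [head_eq]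
    · rw [head_eq, insOp_head]
  · exact absurd hb hd

/-- For `n ≥ 1`, every rectangular permutation `π ∈ S_n` can be written in exactly
one of the following four forms, with `σ` a rectangular permutation in `S_{n-1}`
which is uniquely determined in each case:
(a) `π = ρ_{1,1}(σ)`; (b) `π = ρ_{1,2}(σ)` with `σ₁ ≠ 1`;
(c) `π = ρ_{σ₁,1}(σ)` with `σ₁ ≠ 1`; (d) `π = ρ_{σ₁+1,1}(σ)`
(here `σ₁` is the first value of `σ`, so in cases (c), (d) `σ` is nonempty). -/
theorem rectangular_unique_factorization (n : ℕ) (hn : 1 ≤ n) (w : List ℕ)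
    (hperm : IsPermList n w) (hrect : Rectangular w) :
    ∃! x : Fin 4 × List ℕ,
      IsPermList (n - 1) x.2 ∧ Rectangular x.2 ∧
        ((x.1 = 0 ∧ w = insOp 1 1 x.2) ∨
         (x.1 = 1 ∧ x.2.headI ≠ 1 ∧ w = insOp 1 2 x.2) ∨
         (x.1 = 2 ∧ x.2 ≠ [] ∧ x.2.headI ≠ 1 ∧ w = insOp x.2.headI 1 x.2) ∨
         (x.1 = 3 ∧ x.2 ≠ [] ∧ w = insOp (x.2.headI + 1) 1 x.2)) := by
  obtain ⟨k, i, hi, hk⟩ := exists_factorsAs hn hperm hrect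
  have hσ := hperm.removeValue hi
  refine ⟨(k, removeValue i w), ⟨hσ, hrect.removeValue i, hk⟩, ?_⟩
  rintro y ⟨hy, -, hyk⟩
  exact FactorsAs.unique hyk hk hy.zero_notMem hσ.zero_notMem
end

section
/- If τ_1, τ_2 ∈ S_n both avoid the patterns 132 and 123, then the composition τ_1 ∘ τ_2 is 1-almost-increasing. -/
/-- A permutation is 1-almost-increasing if it avoids 4321, 4312, 3421 and 3412. -/
def AlmostIncreasing (w : List ℕ) : Prop :=
  Avoids w [4,3,2,1] ∧ Avoids w [4,3,1,2] ∧ Avoids w [3,4,2,1] ∧ Avoids w [3,4,1,2]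

/-- The composition `τ₁ ∘ τ₂` of two permutations given in one-line notation:
its `i`-th value is `τ₁(τ₂(i))`. -/
def compPerm (t1 t2 : List ℕ) : List ℕ := t2.map (fun v => t1.getD (v - 1) 0)

/-!
A permutation avoids 123 and 132 exactly when each of its entries is followed by at most one
larger entry. Suppose `τ₁ ∘ τ₂` had positions `p₁ < p₂ < p₃ < p₄` whose last two values lie below
the first two (the common shape of 4321, 4312, 3421, 3412), and put `aᵢ = τ₂(pᵢ)`. The property of
`τ₁` forces `a₃` and `a₄` above `min(a₁, a₂)`. If `a₁ < a₂`, then `a₁` is already followed by the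
larger `a₂`, so `a₃ < a₁`, a contradiction; if `a₂ < a₁`, then `a₂` is followed by the two larger
entries `a₃`, `a₄` of `τ₂`.
-/

theorem containsPattern_iff {w p : List ℕ} :
    ContainsPattern w p ↔ ∃ f : Fin p.length → Fin w.length, StrictMono f ∧
      ∀ a b, w[f a] < w[f b] ↔ p[a] < p[b] := by
  constructor
  · rintro ⟨s, hs, hlen, hrel⟩
    obtain ⟨is, rfl, hpw⟩ := List.sublist_eq_map_getElem hs
    rw [List.length_map] at hlen
    refine ⟨fun a => is[a.cast hlen.symm],
      fun a b hab => List.pairwise_iff_getElem.mp hpw _ _ _ _ hab, fun a b => ?_⟩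
    simpa [List.getD_eq_getElem, hlen] using hrel a b a.2 b.2
  · rintro ⟨f, hf, hrel⟩
    refine ⟨List.ofFn fun a => w[f a], ?_, List.length_ofFn, fun a b ha hb => ?_⟩
    · have := List.map_getElem_sublist (List.pairwise_ofFn.mpr hf)
      rwa [List.map_ofFn] at this
    · simpa [List.getD_eq_getElem, ha, hb] using hrel ⟨a, ha⟩ ⟨b, hb⟩

variable {α β γ : Type*}

def AtMostOneLargerAfter [LT α] [LT β] (f : α → β) : Prop :=
  ∀ ⦃i j k : α⦄, i < j → j < k → ¬ (f i < f j ∧ f i < f k)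

namespace AtMostOneLargerAfter

theorem comp_monotone [LT α] [LinearOrder β] [Preorder γ] {f : α → β} {g : β → γ}
    (hf : AtMostOneLargerAfter f) (hg : Monotone g) : AtMostOneLargerAfter (g ∘ f) :=
  fun _ _ _ hij hjk h => hf hij hjk ⟨hg.reflect_lt h.1, hg.reflect_lt h.2⟩

theorem not_lt_and_lt [LinearOrder α] [LT β] {f : α → β} (hf : AtMostOneLargerAfter f)
    {i j k : α} (hij : i < j) (hik : i < k) (hjk : j ≠ k) : ¬ (f i < f j ∧ f i < f k) := by
  rcases hjk.lt_or_gt with hjk | hkj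
  · exact hf hij hjk
  · exact fun h => hf hik hkj h.symm

theorem comp_not_two_below_two [LinearOrder α] [LinearOrder β] [Preorder γ] {σ : α → β}
    {τ : β → γ} (hσ : AtMostOneLargerAfter σ) (hτ : AtMostOneLargerAfter τ) {i j k l : α}
    (hij : i < j) (hjk : j < k) (hkl : k < l) (hσij : σ i ≠ σ j)
    (hk : τ (σ k) < τ (σ i) ∧ τ (σ k) < τ (σ j))
    (hl : τ (σ l) < τ (σ i) ∧ τ (σ l) < τ (σ j)) : False := by
  have above_min : ∀ m, τ (σ m) < τ (σ i) ∧ τ (σ m) < τ (σ j) → σ i < σ m ∨ σ j < σ m := by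
    rintro m ⟨hmi, hmj⟩
    by_contra! h
    refine hτ.not_lt_and_lt (h.1.lt_of_ne ?_) (h.2.lt_of_ne ?_) hσij ⟨hmi, hmj⟩
    · exact fun h => (h ▸ hmi).false
    · exact fun h => (h ▸ hmj).false
  rcases hσij.lt_or_gt with hij' | hji'
  · rcases above_min k hk with hik | hjk'
    · exact hσ hij hjk ⟨hij', hik⟩
    · exact hσ hij hjk ⟨hij', hij'.trans hjk'⟩
  · have above_j : ∀ m, τ (σ m) < τ (σ i) ∧ τ (σ m) < τ (σ j) → σ j < σ m :=
      fun m hm => (above_min m hm).elim hji'.trans id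
    exact hσ hjk hkl ⟨above_j k hk, above_j l hl⟩

end AtMostOneLargerAfter

/- Past the end of `t` the default value `0` lies below every entry, so the property extends from
the positions of `t` to all of `ℕ`. -/
theorem atMostOneLargerAfter_getD {t : List ℕ} (hnd : t.Nodup) (h132 : Avoids t [1, 3, 2])
    (h123 : Avoids t [1, 2, 3]) : AtMostOneLargerAfter (t.getD · 0) := by
  rintro i j k hij hjk ⟨hj, hk⟩
  dsimp only at hj hk
  have hk' : k < t.length := by
    by_contra! h
    rw [List.getD_eq_default t 0 h] at hk
    exact Nat.not_lt_zero _ hk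
  have hj' : j < t.length := hjk.trans hk'
  have hi' : i < t.length := hij.trans hj'
  rw [List.getD_eq_getElem t 0 hi', List.getD_eq_getElem t 0 hj'] at hj
  rw [List.getD_eq_getElem t 0 hi', List.getD_eq_getElem t 0 hk'] at hk
  have hne : t[j] ≠ t[k] := fun h => hjk.ne (hnd.getElem_inj_iff.mp h)
  let f : Fin 3 → Fin t.length := ![⟨i, hi'⟩, ⟨j, hj'⟩, ⟨k, hk'⟩]
  have hf : StrictMono f := Fin.strictMono_iff_lt_succ.mpr <| by
    simp [Fin.forall_fin_two, f, ← Fin.val_fin_lt, hij, hjk]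
  rcases hne.lt_or_gt with hjk' | hkj'
  · refine h123 (containsPattern_iff.mpr ⟨f, hf, fun a b => ?_⟩)
    fin_cases a <;> fin_cases b <;> simp [f, hj, hk, hjk', hj.le, hk.le, hjk'.le]
  · refine h132 (containsPattern_iff.mpr ⟨f, hf, fun a b => ?_⟩)
    fin_cases a <;> fin_cases b <;> simp [f, hj, hk, hkj', hj.le, hk.le, hkj'.le]

theorem IsPermList.nodup {n : ℕ} {t : List ℕ} (h : IsPermList n t) : t.Nodup :=
  h.nodup_iff.mpr List.nodup_range'

theorem IsPermList.getD_sub_one_ne {n : ℕ} {t : List ℕ} (h : IsPermList n t) {i j : ℕ}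
    (hi : i < t.length) (hj : j < t.length) (hij : i ≠ j) :
    t.getD i 0 - 1 ≠ t.getD j 0 - 1 := by
  have pos : ∀ x ∈ t, 1 ≤ x := fun x hx => (List.mem_range'_1.mp (h.mem_iff.mp hx)).1
  rw [List.getD_eq_getElem t 0 hi, List.getD_eq_getElem t 0 hj]
  have hne : t[i] ≠ t[j] := fun h' => hij (h.nodup.getElem_inj_iff.mp h')
  have := pos _ (List.getElem_mem hi)
  have := pos _ (List.getElem_mem hj)
  omega

theorem getElem_compPerm {t1 t2 : List ℕ} {i : ℕ} (hi : i < (compPerm t1 t2).length) :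
    (compPerm t1 t2)[i] = t1.getD (t2.getD i 0 - 1) 0 := by
  rw [List.getD_eq_getElem t2 0 (hi.trans_eq (List.length_map _))]
  exact List.getElem_map _

theorem avoids_compPerm {n : ℕ} {t1 t2 : List ℕ} (h2 : IsPermList n t2)
    (hτ1 : AtMostOneLargerAfter (t1.getD · 0)) (hτ2 : AtMostOneLargerAfter (t2.getD · 0))
    {a b c d : ℕ} (hca : c < a) (hcb : c < b) (hda : d < a) (hdb : d < b) :
    Avoids (compPerm t1 t2) [a, b, c, d] := by
  rw [Avoids, containsPattern_iff]
  rintro ⟨f, hf, hrel⟩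
  -- the values of `t2` are 1-based, the positions of `t1` 0-based
  set σ : ℕ → ℕ := (· - 1) ∘ (t2.getD · 0)
  have hσ : AtMostOneLargerAfter σ := hτ2.comp_monotone fun _ _ h => Nat.sub_le_sub_right h 1
  have hw : ∀ x : Fin (compPerm t1 t2).length, (compPerm t1 t2)[x] = t1.getD (σ x) 0 :=
    fun x => getElem_compPerm x.2
  have hlt : ∀ x : Fin (compPerm t1 t2).length, (x : ℕ) < t2.length :=
    fun x => x.2.trans_eq (List.length_map _)
  have hσ01 : σ (f 0) ≠ σ (f 1) := h2.getD_sub_one_ne (hlt _) (hlt _)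
    (Fin.val_ne_of_ne (hf.injective.ne (by decide : (0 : Fin 4) ≠ 1)))
  refine hσ.comp_not_two_below_two hτ1 (hf (by decide : (0 : Fin 4) < 1))
    (hf (by decide : (1 : Fin 4) < 2)) (hf (by decide : (2 : Fin 4) < 3)) hσ01 ⟨?_, ?_⟩ ⟨?_, ?_⟩
  · simpa [hw] using (hrel 2 0).mpr hca
  · simpa [hw] using (hrel 2 1).mpr hcb
  · simpa [hw] using (hrel 3 0).mpr hda
  · simpa [hw] using (hrel 3 1).mpr hdb

/-- If `τ₁, τ₂ ∈ S_n` both avoid the patterns 132 and 123, then `τ₁ ∘ τ₂` is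
1-almost-increasing. -/
theorem comp_almostIncreasing (n : ℕ) (t1 t2 : List ℕ)
    (h1 : IsPermList n t1) (h2 : IsPermList n t2)
    (ha1 : Avoids t1 [1,3,2]) (hb1 : Avoids t1 [1,2,3])
    (ha2 : Avoids t2 [1,3,2]) (hb2 : Avoids t2 [1,2,3]) :
    AlmostIncreasing (compPerm t1 t2) := by
  have hτ1 := atMostOneLargerAfter_getD h1.nodup ha1 hb1
  have hτ2 := atMostOneLargerAfter_getD h2.nodup ha2 hb2
  refine ⟨?_, ?_, ?_, ?_⟩ <;> apply avoids_compPerm h2 hτ1 hτ2 <;> norm_num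
end
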